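/- arXiv:2506.21510 — 4 statements merged into one kernel-verified Lean document; each statement's English description precedes it below -/
import Mathlib

section
/- The total demand charge along a trajectory equals p times the increase of the running peak: for p ≥ 0 and the peak recursion c_{t+1} = max(z_t, c_t) with c_0 = c₀, the sum ∑_{t<T} p·max(z_t − c_t, 0) equals p·(max(c₀, max_{t<T} z_t) − c₀) for T ≥ 1; consequently this sum, viewed as a function of the pair (sequence z, initial c₀), satisfies the midpoint convexity inequality: for two trajectories (z, c₀) and (z', c₀'), the average of the two demand-charge sums is at least the demand-charge sum of the averaged trajectory ((z+z')/2, (c₀+c₀')/2). -/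
/-- Running peak of a sequence `z` with initial value `c₀`. -/
def runPeak (z : ℕ → ℝ) (c₀ : ℝ) : ℕ → ℝ
  | 0 => c₀
  | t + 1 => max (z t) (runPeak z c₀ t)

/-- Total demand charge along a trajectory. -/
noncomputable def dCharge (p : ℝ) (T : ℕ) (z : ℕ → ℝ) (c₀ : ℝ) : ℝ :=
  ∑ t ∈ Finset.range T, p * max (z t - runPeak z c₀ t) 0

lemma dCharge_eq_peak (p : ℝ) (z : ℕ → ℝ) (c₀ : ℝ) (T : ℕ) :
    dCharge p T z c₀ = p * (runPeak z c₀ T - c₀) := by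
  induction T with
  | zero => simp [dCharge, runPeak]
  | succ n ih =>
      rw [dCharge, Finset.sum_range_succ, ← dCharge, ih]
      have : max (z n - runPeak z c₀ n) 0 = max (z n) (runPeak z c₀ n) - runPeak z c₀ n := by
        rcases le_total (z n) (runPeak z c₀ n) with h | h
        · rw [max_eq_right h, max_eq_right (by linarith), sub_self]
        · rw [max_eq_left h, max_eq_left (by linarith)]
      rw [this, runPeak]
      ring

lemma runPeak_eq_sup (z : ℕ → ℝ) (c₀ : ℝ) (T : ℕ) (hT : 0 < T) :
    runPeak z c₀ T = max c₀ ((Finset.range T).sup'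
      (Finset.nonempty_range_iff.mpr hT.ne') z) := by
  induction T with
  | zero => omega
  | succ n ih =>
      rcases Nat.eq_zero_or_pos n with h | h
      · subst h
        simp [runPeak, max_comm]
      · have hne : (Finset.range n).Nonempty := Finset.nonempty_range_iff.mpr h.ne'
        rw [runPeak, ih h]
        have hsup : (Finset.range (n+1)).sup' (Finset.nonempty_range_iff.mpr (Nat.succ_ne_zero n)) z
            = z n ⊔ (Finset.range n).sup' hne z := by
          simp [Finset.range_add_one, Finset.sup'_insert hne]
        rw [hsup]
        rcases le_total (z n) (max c₀ (Finset.sup' _ hne z)) with hle | hle <;>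
          simp [max_assoc, max_comm, max_left_comm]

theorem demand_charge_peak_increase_and_midpoint_convex
    (p : ℝ) (hp : 0 ≤ p) (T : ℕ) (hT : 1 ≤ T)
    (z z' : ℕ → ℝ) (c₀ c₀' : ℝ) :
    dCharge p T z c₀ =
      p * (max c₀ ((Finset.range T).sup'
        (Finset.nonempty_range_iff.mpr (by omega)) z) - c₀) ∧
    dCharge p T (fun t => (z t + z' t) / 2) ((c₀ + c₀') / 2)
      ≤ (dCharge p T z c₀ + dCharge p T z' c₀') / 2 := by
  have hT0 : 0 < T := hT
  have hne : (Finset.range T).Nonempty := Finset.nonempty_range_iff.mpr hT0.ne'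
  have key : ∀ (w : ℕ → ℝ) (c : ℝ),
      dCharge p T w c = p * (max c ((Finset.range T).sup' hne w) - c) := by
    intro w c
    rw [dCharge_eq_peak, runPeak_eq_sup _ _ _ hT0]
  constructor
  · exact key z c₀
  · rw [key, key, key]
    have h1 : (Finset.range T).sup' hne (fun t => (z t + z' t) / 2)
        ≤ ((Finset.range T).sup' hne z + (Finset.range T).sup' hne z') / 2 := by
      apply Finset.sup'_le
      intro t ht
      have := Finset.le_sup' z ht
      have := Finset.le_sup' z' ht
      linarith
    set S := (Finset.range T).sup' hne z
    set S' := (Finset.range T).sup' hne z'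
    have h2 : max ((c₀ + c₀') / 2) ((Finset.range T).sup' hne (fun t => (z t + z' t) / 2))
        ≤ (max c₀ S + max c₀' S') / 2 := by
      apply max_le
      · have := le_max_left c₀ S; have := le_max_left c₀' S'; linarith
      · have := le_max_right c₀ S; have := le_max_right c₀' S'; linarith
    nlinarith [h2]
end

section
/- Suppose a finite-horizon value function is defined by V(x) = sup over feasible control sequences u of a sum of jointly concave stage rewards r_t(x_t, u_t), where the state evolves linearly in (x_t, u_t) except for the peak component which evolves as c_{t+1} = max(z_t, c_t) with z_t affine in (x_t, u_t), and the feasible control set is convex. If each stage reward is concave jointly in state and control and nonincreasing in the peak component in the sense that the demand-charge term −p·max(z−c, 0) (p ≥ 0) is the only dependence on c, then V is concave in the initial state components (s, c). (Special case T = 1: the function V(s, c) = sup_{u ∈ C} [U(u) − f(a·s + b·u) − p·max(a·s + b·u − c, 0)] with U concave, f convex, C ⊆ ℝ convex and compact, a, b, p constants with p ≥ 0, is concave in (s, c) ∈ ℝ².) -/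
theorem value_function_concave (U f : ℝ → ℝ)
    (hU : ConcaveOn ℝ Set.univ U) (hUc : Continuous U)
    (hf : ConvexOn ℝ Set.univ f) (hfc : Continuous f)
    (C : Set ℝ) (hCne : C.Nonempty) (hCconv : Convex ℝ C) (hCcomp : IsCompact C)
    (a b p : ℝ) (hp : 0 ≤ p) :
    ConcaveOn ℝ Set.univ (fun x : ℝ × ℝ =>
      ⨆ u : C, (U u - f (a * x.1 + b * u) - p * max (a * x.1 + b * u - x.2) 0)) := by
  set g : ℝ × ℝ → ℝ → ℝ := fun x u =>
    U u - f (a * x.1 + b * u) - p * max (a * x.1 + b * u - x.2) 0 with hg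
  have gc : ∀ x : ℝ × ℝ, Continuous (g x) := by
    intro x
    apply Continuous.sub
    · exact hUc.sub (hfc.comp (by continuity))
    · exact continuous_const.mul ((by continuity : Continuous fun u : ℝ =>
        a * x.1 + b * u - x.2).max continuous_const)
  have key : ∀ x : ℝ × ℝ, ∃ u ∈ C, ∀ v ∈ C, g x v ≤ g x u := by
    intro x
    obtain ⟨u, hu, hmax⟩ := hCcomp.exists_isMaxOn hCne (gc x).continuousOn
    exact ⟨u, hu, fun v hv => hmax hv⟩
  haveI : Nonempty ↑C := hCne.to_subtype
  refine ⟨convex_univ, ?_⟩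
  intro x _ y _ q r hq hr hqr
  obtain ⟨u1, hu1, hmax1⟩ := key x
  obtain ⟨u2, hu2, hmax2⟩ := key y
  obtain ⟨um, hum, hmaxm⟩ := key (q • x + r • y)
  have hVx : (⨆ u : C, g x u) ≤ g x u1 := ciSup_le (fun u => hmax1 u u.2)
  have hVy : (⨆ u : C, g y u) ≤ g y u2 := ciSup_le (fun u => hmax2 u u.2)
  have hmem : q * u1 + r * u2 ∈ C := hCconv hu1 hu2 hq hr hqr
  have hbdd : BddAbove (Set.range fun u : C => g (q • x + r • y) u) := by
    refine ⟨g (q • x + r • y) um, ?_⟩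
    rintro _ ⟨u, rfl⟩
    exact hmaxm u u.2
  have hle : g (q • x + r • y) (q * u1 + r * u2) ≤ ⨆ u : C, g (q • x + r • y) u :=
    le_ciSup hbdd ⟨q * u1 + r * u2, hmem⟩
  have hmid1 : (q • x + r • y).1 = q * x.1 + r * y.1 := rfl
  have hmid2 : (q • x + r • y).2 = q * x.2 + r * y.2 := rfl
  have hUineq : q * U u1 + r * U u2 ≤ U (q * u1 + r * u2) := by
    have := hU.2 (Set.mem_univ u1) (Set.mem_univ u2) hq hr hqr
    simpa [smul_eq_mul] using this
  set z1 := a * x.1 + b * u1 with hz1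
  set z2 := a * y.1 + b * u2 with hz2
  have hfineq : f (q * z1 + r * z2) ≤ q * f z1 + r * f z2 := by
    have := hf.2 (Set.mem_univ z1) (Set.mem_univ z2) hq hr hqr
    simpa [smul_eq_mul] using this
  have hzm : a * (q • x + r • y).1 + b * (q * u1 + r * u2) = q * z1 + r * z2 := by
    rw [hmid1]; ring
  have hmaxineq : max (q * (z1 - x.2) + r * (z2 - y.2)) 0 ≤
      q * max (z1 - x.2) 0 + r * max (z2 - y.2) 0 := by
    apply max_le
    · have h1 : q * (z1 - x.2) ≤ q * max (z1 - x.2) 0 :=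
        mul_le_mul_of_nonneg_left (le_max_left _ _) hq
      have h2 : r * (z2 - y.2) ≤ r * max (z2 - y.2) 0 :=
        mul_le_mul_of_nonneg_left (le_max_left _ _) hr
      linarith
    · have h1 : (0:ℝ) ≤ q * max (z1 - x.2) 0 :=
        mul_nonneg hq (le_max_right _ _)
      have h2 : (0:ℝ) ≤ r * max (z2 - y.2) 0 :=
        mul_nonneg hr (le_max_right _ _)
      linarith
  have hpmax : p * max (q * (z1 - x.2) + r * (z2 - y.2)) 0 ≤
      p * (q * max (z1 - x.2) 0 + r * max (z2 - y.2) 0) :=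
    mul_le_mul_of_nonneg_left hmaxineq hp
  have hgineq : q * g x u1 + r * g y u2 ≤ g (q • x + r • y) (q * u1 + r * u2) := by
    simp only [hg, hzm, hmid2, ← hz1, ← hz2]
    have harg : q * z1 + r * z2 - (q * x.2 + r * y.2)
        = q * (z1 - x.2) + r * (z2 - y.2) := by ring
    rw [harg]
    nlinarith [hUineq, hfineq, hpmax]
  calc q • (⨆ u : C, g x u) + r • (⨆ u : C, g y u)
      ≤ q * g x u1 + r * g y u2 := by
        simp only [smul_eq_mul]
        gcongr
    _ ≤ g (q • x + r • y) (q * u1 + r * u2) := hgineq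
    _ ≤ ⨆ u : C, g (q • x + r • y) u := hle
end

section
/- Single-step threshold optimality: let h : ℝ → ℝ be differentiable, strictly concave with invertible derivative h', and let p⁺ ≥ p⁻ ≥ 0. Then the unconstrained maximizer of φ(v) = h(v) − p⁺·max(v − g, 0) + p⁻·max(−(v − g), 0) is v† := (h')⁻¹(p⁻) if (h')⁻¹(p⁻) < g; v† := g if (h')⁻¹(p⁺) ≤ g ≤ (h')⁻¹(p⁻); and v† := (h')⁻¹(p⁺) if g < (h')⁻¹(p⁺). That is, φ(v†) ≥ φ(v) for all v ∈ ℝ. -/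
lemma tangent_ineq (h h' : ℝ → ℝ) (hder : ∀ x, HasDerivAt h (h' x) x)
    (hanti : StrictAnti h') (v w : ℝ) : h v ≤ h w + h' w * (v - w) := by
  rcases lt_trichotomy v w with hvw | hvw | hvw
  · obtain ⟨c, hc, hceq⟩ := exists_hasDerivAt_eq_slope h h' hvw
      (fun x _ => (hder x).continuousAt.continuousWithinAt) (fun x _ => hder x)
    have h1 : h' w < h' c := hanti hc.2
    have h3 : 0 < w - v := by linarith
    have h2 : h w - h v = h' c * (w - v) := by
      field_simp at hceq; linarith [hceq]
    nlinarith
  · simp [hvw]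
  · obtain ⟨c, hc, hceq⟩ := exists_hasDerivAt_eq_slope h h' hvw
      (fun x _ => (hder x).continuousAt.continuousWithinAt) (fun x _ => hder x)
    have h1 : h' c < h' w := hanti hc.1
    have h3 : 0 < v - w := by linarith
    have h2 : h v - h w = h' c * (v - w) := by
      field_simp at hceq; linarith [hceq]
    nlinarith

theorem single_step_threshold_optimality
    (h h' : ℝ → ℝ) (hder : ∀ x, HasDerivAt h (h' x) x) (hanti : StrictAnti h')
    (pp pm g vplus vminus : ℝ) (hppm : pm ≤ pp) (hpm : 0 ≤ pm)
    (hvp : h' vplus = pp) (hvm : h' vminus = pm) :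
    ∀ v : ℝ,
      h v - pp * max (v - g) 0 + pm * max (-(v - g)) 0 ≤
      (fun w => h w - pp * max (w - g) 0 + pm * max (-(w - g)) 0)
        (if vminus < g then vminus else if g < vplus then vplus else g) := by
  intro v
  simp only
  have key := tangent_ineq h h' hder hanti v
  split_ifs with h1 h2
  · -- w = vminus, vminus < g
    have hk := key vminus
    rw [hvm] at hk
    rcases le_or_gt v g with hv | hv
    · rw [max_eq_right (by linarith), max_eq_left (by linarith),
        max_eq_right (by linarith : vminus - g ≤ 0), max_eq_left (by linarith : (0:ℝ) ≤ -(vminus - g))]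
      nlinarith
    · rw [max_eq_left (by linarith : (0:ℝ) ≤ v - g), max_eq_right (by linarith),
        max_eq_right (by linarith : vminus - g ≤ 0), max_eq_left (by linarith : (0:ℝ) ≤ -(vminus - g))]
      nlinarith
  · -- w = vplus, g < vplus, g ≤ vminus
    have hk := key vplus
    rw [hvp] at hk
    rcases le_or_gt v g with hv | hv
    · rw [max_eq_right (by linarith), max_eq_left (by linarith),
        max_eq_left (by linarith : (0:ℝ) ≤ vplus - g), max_eq_right (by linarith : -(vplus - g) ≤ 0)]
      nlinarith
    · rw [max_eq_left (by linarith : (0:ℝ) ≤ v - g), max_eq_right (by linarith),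
        max_eq_left (by linarith : (0:ℝ) ≤ vplus - g), max_eq_right (by linarith : -(vplus - g) ≤ 0)]
      nlinarith
  · -- w = g, vplus ≤ g ≤ vminus
    push_neg at h1 h2
    have hk := key g
    have hgp : h' g ≤ pp := by
      rcases eq_or_lt_of_le h2 with he | hlt
      · rw [← he, hvp]
      · rw [← hvp]; exact le_of_lt (hanti hlt)
    have hgm : pm ≤ h' g := by
      rcases eq_or_lt_of_le h1 with he | hlt
      · rw [he, hvm]
      · rw [← hvm]; exact le_of_lt (hanti hlt)
    simp only [sub_self, neg_zero, max_self]
    rcases le_or_gt v g with hv | hv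
    · rw [max_eq_right (by linarith), max_eq_left (by linarith)]
      nlinarith
    · rw [max_eq_left (by linarith : (0:ℝ) ≤ v - g), max_eq_right (by linarith)]
      nlinarith
end

section
/- Marginal-pricing characterization: let h be differentiable concave with h' strictly decreasing, p⁺ ≥ p⁻ ≥ 0, and g ∈ ℝ. If h'(g) ≤ p⁻, then the unconstrained maximizer v† of φ(v) = h(v) − p⁺·[v−g]⁺ + p⁻·[v−g]⁻ satisfies v† ≤ g and h'(v†) = p⁻ (net export regime); if h'(g) ≥ p⁺ then v† ≥ g and h'(v†) = p⁺ (net import regime); if p⁻ < h'(g) < p⁺ then v† = g is the unique maximizer (zero net exchange regime). -/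
lemma concave_grad_ineq (h h' : ℝ → ℝ) (hder : ∀ x, HasDerivAt h (h' x) x)
    (hanti : StrictAnti h') : ∀ a b : ℝ, a ≠ b → h b - h a < h' a * (b - a) := by
  have hc : Continuous h := by
    rw [continuous_iff_continuousAt]; exact fun x => (hder x).continuousAt
  intro a b hab
  rcases lt_or_gt_of_ne hab with hlt | hlt
  · obtain ⟨c, hc1, hc2⟩ := exists_hasDerivAt_eq_slope h h' hlt hc.continuousOn
      (fun x _ => hder x)
    have h1 : h' c < h' a := hanti hc1.1
    have h2 : h' c * (b - a) = h b - h a :=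
      (eq_div_iff (by linarith : b - a ≠ 0)).mp hc2
    nlinarith [hc1.1, hc1.2]
  · obtain ⟨c, hc1, hc2⟩ := exists_hasDerivAt_eq_slope h h' hlt hc.continuousOn
      (fun x _ => hder x)
    have h1 : h' a < h' c := hanti hc1.2
    have h2 : h' c * (a - b) = h a - h b :=
      (eq_div_iff (by linarith : a - b ≠ 0)).mp hc2
    nlinarith [hc1.1, hc1.2]

theorem marginal_pricing_characterization
    (pp pm g : ℝ) (hppm : pm ≤ pp) (hpm : 0 ≤ pm)
    (h h' : ℝ → ℝ) (hder : ∀ x, HasDerivAt h (h' x) x)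
    (hanti : StrictAnti h') (hcont : Continuous h')
    (hsurj : ∀ y ∈ Set.Icc pm pp, ∃ x : ℝ, h' x = y) :
    (h' g ≤ pm → ∃ vdag : ℝ,
      (∀ v : ℝ, h v - pp * max (v - g) 0 + pm * max (g - v) 0 ≤
        h vdag - pp * max (vdag - g) 0 + pm * max (g - vdag) 0) ∧
      vdag ≤ g ∧ h' vdag = pm) ∧
    (pp ≤ h' g → ∃ vdag : ℝ,
      (∀ v : ℝ, h v - pp * max (v - g) 0 + pm * max (g - v) 0 ≤
        h vdag - pp * max (vdag - g) 0 + pm * max (g - vdag) 0) ∧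
      g ≤ vdag ∧ h' vdag = pp) ∧
    (pm < h' g → h' g < pp → ∀ v : ℝ, v ≠ g →
      h v - pp * max (v - g) 0 + pm * max (g - v) 0 <
      h g - pp * max (g - g) 0 + pm * max (g - g) 0) := by
  have key : ∀ a b : ℝ, h b - h a ≤ h' a * (b - a) := by
    intro a b
    rcases eq_or_ne a b with rfl | hab
    · simp
    · exact le_of_lt (concave_grad_ineq h h' hder hanti a b hab)
  have keys := concave_grad_ineq h h' hder hanti
  refine ⟨?_, ?_, ?_⟩
  · intro hg
    obtain ⟨vd, hvd⟩ := hsurj pm ⟨le_refl _, hppm⟩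
    have hvg : vd ≤ g := by
      by_contra hcon
      push_neg at hcon
      have := hanti hcon
      rw [hvd] at this; linarith
    refine ⟨vd, ?_, hvg, hvd⟩
    intro v
    have hk := key vd v
    rw [hvd] at hk
    rcases le_or_gt v g with hv | hv
    · rw [max_eq_right (by linarith), max_eq_left (by linarith),
        max_eq_right (by linarith), max_eq_left (by linarith)]
      nlinarith
    · rw [max_eq_left (by linarith), max_eq_right (by linarith),
        max_eq_right (by linarith), max_eq_left (by linarith)]
      nlinarith
  · intro hg
    obtain ⟨vd, hvd⟩ := hsurj pp ⟨hppm, le_refl _⟩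
    have hvg : g ≤ vd := by
      by_contra hcon
      push_neg at hcon
      have := hanti hcon
      rw [hvd] at this; linarith
    refine ⟨vd, ?_, hvg, hvd⟩
    intro v
    have hk := key vd v
    rw [hvd] at hk
    rcases le_or_gt v g with hv | hv
    · rw [max_eq_right (by linarith), max_eq_left (by linarith),
        max_eq_left (by linarith), max_eq_right (by linarith)]
      nlinarith
    · rw [max_eq_left (by linarith), max_eq_right (by linarith),
        max_eq_left (by linarith), max_eq_right (by linarith)]
      nlinarith
  · intro h1 h2 v hv
    have hk := keys g v hv.symm
    rcases lt_or_gt_of_ne hv with hlt | hlt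
    · rw [max_eq_right (by linarith), max_eq_left (by linarith)]
      simp only [sub_self, max_self, mul_zero]
      nlinarith
    · rw [max_eq_left (by linarith), max_eq_right (by linarith)]
      simp only [sub_self, max_self, mul_zero]
      nlinarith
end
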